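/- Let k and q be positive integers and set p = 2k. Let G be a finite connected simple graph with an edge weight function w assigning to each edge a positive natural number (w(e) ≥ 1 for every edge e), and let T be a set of edges of G. Assume G is (pq, p)-unbreakable, i.e., there is no partition (A, B) of V(G) with |A| > pq, |B| > pq and |E(A,B)| ≤ p. Let (A1, B1) and (A2, B2) be partitions of V(G) such that for each i ∈ {1,2}, T ⊆ E(Ai, Bi) and the total weight of the edges in E(Ai, Bi) \ T is at most k. Then min(|A1 △ A2|, |A1 △ B2|) ≤ pq. -/

import Mathlib

/-- The set `E(A,B)` of edges of `G` with one endpoint in `A` and the other in `B`. -/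
def finCut {V : Type*} [Fintype V] [DecidableEq V] (G : SimpleGraph V)
    [DecidableRel G.Adj] (A B : Finset V) : Finset (Sym2 V) :=
  G.edgeFinset.filter (fun e => ∃ x ∈ A, ∃ y ∈ B, e = s(x, y))

/-!
Write `Bᵢ = Aᵢᶜ`. The sets `A1 ∆ A2` and `A1 ∆ B2` are complementary, and the cut of `S ∆ R`
is the symmetric difference of the cuts of `S` and `R` (an edge crosses it iff it crosses exactly
one of them). The terminal edges lie in both given cuts, so every edge of the cut of `A1 ∆ A2` is
a nonterminal edge of one of them; as weights are at least `1`, there are at most `k + k = p` of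
them. If both symmetric differences had more than `pq` vertices, this would contradict
unbreakability.
-/

open Finset
open scoped symmDiff

namespace Finset

lemma card_le_of_one_le_of_sum_le {α : Type*} {s : Finset α} {w : α → ℕ} {k : ℕ}
    (hw : ∀ a ∈ s, 1 ≤ w a) (hk : ∑ a ∈ s, w a ≤ k) : #s ≤ k :=
  (card_nsmul_le_sum s w 1 hw).trans' (by simp) |>.trans hk

variable {α : Type*} [DecidableEq α]

lemma card_symmDiff_le_card_sdiff_add_card_sdiff {s t u : Finset α} (hs : u ⊆ s) (ht : u ⊆ t) :
    #(s ∆ t) ≤ #(s \ u) + #(t \ u) :=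
  calc #(s ∆ t) ≤ #(s \ t) + #(t \ s) := card_union_le _ _
    _ ≤ #(s \ u) + #(t \ u) :=
      add_le_add (card_le_card (sdiff_subset_sdiff le_rfl ht))
        (card_le_card (sdiff_subset_sdiff le_rfl hs))

lemma symmDiff_compl_right [Fintype α] (s t : Finset α) : s ∆ tᶜ = (s ∆ t)ᶜ := by
  ext; simp only [mem_symmDiff, mem_compl]; tauto

end Finset

section

variable {V : Type*} [Fintype V] [DecidableEq V] (G : SimpleGraph V) [DecidableRel G.Adj]

lemma mk_mem_finCut_compl_iff {S : Finset V} {x y : V} :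
    s(x, y) ∈ finCut G S Sᶜ ↔ G.Adj x y ∧ (x ∈ S ↔ y ∉ S) := by
  simp only [finCut, mem_filter, SimpleGraph.mem_edgeFinset, SimpleGraph.mem_edgeSet,
    mem_compl, Sym2.eq_iff]
  constructor
  · rintro ⟨hxy, a, ha, b, hb, ⟨rfl, rfl⟩ | ⟨rfl, rfl⟩⟩ <;> tauto
  · rintro ⟨hxy, hS⟩
    refine ⟨hxy, ?_⟩
    by_cases hx : x ∈ S
    · exact ⟨x, hx, y, hS.1 hx, by tauto⟩
    · exact ⟨y, by tauto, x, hx, by tauto⟩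

lemma finCut_symmDiff (S R : Finset V) :
    finCut G (S ∆ R) (S ∆ R)ᶜ = finCut G S Sᶜ ∆ finCut G R Rᶜ := by
  ext e
  induction e using Sym2.ind with
  | _ x y =>
    simp only [mem_symmDiff, mk_mem_finCut_compl_iff]
    tauto

lemma finCut_subset_edgeFinset (A B : Finset V) : finCut G A B ⊆ G.edgeFinset :=
  filter_subset _ _

end

theorem unbreakable_cuts_close_general {V : Type*} [Fintype V] [DecidableEq V]
    (G : SimpleGraph V) [DecidableRel G.Adj]
    (w : Sym2 V → ℕ) (hw : ∀ e ∈ G.edgeSet, 1 ≤ w e)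
    (T : Finset (Sym2 V)) (k q : ℕ)
    (hunbreak : ¬ ∃ A B : Finset V, A ∪ B = Finset.univ ∧ Disjoint A B ∧
      2 * k * q < A.card ∧ 2 * k * q < B.card ∧ (finCut G A B).card ≤ 2 * k)
    (A1 B1 A2 B2 : Finset V)
    (hpart1 : A1 ∪ B1 = Finset.univ) (hdisj1 : Disjoint A1 B1)
    (hpart2 : A2 ∪ B2 = Finset.univ) (hdisj2 : Disjoint A2 B2)
    (hT1 : T ⊆ finCut G A1 B1) (hT2 : T ⊆ finCut G A2 B2)
    (hw1 : ∑ e ∈ finCut G A1 B1 \ T, w e ≤ k)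
    (hw2 : ∑ e ∈ finCut G A2 B2 \ T, w e ≤ k) :
    min (symmDiff A1 A2).card (symmDiff A1 B2).card ≤ 2 * k * q := by
  obtain rfl : A1ᶜ = B1 := IsCompl.compl_eq ⟨hdisj1, codisjoint_iff.2 hpart1⟩
  obtain rfl : A2ᶜ = B2 := IsCompl.compl_eq ⟨hdisj2, codisjoint_iff.2 hpart2⟩
  have hweight (A : Finset V) : ∀ e ∈ finCut G A Aᶜ \ T, 1 ≤ w e := fun e he =>
    hw e (SimpleGraph.mem_edgeFinset.1 (finCut_subset_edgeFinset G _ _ (mem_sdiff.1 he).1))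
  by_contra! hfar
  rw [lt_min_iff, symmDiff_compl_right] at hfar
  refine hunbreak ⟨A1 ∆ A2, (A1 ∆ A2)ᶜ, union_compl _, disjoint_compl_right, hfar.1, hfar.2, ?_⟩
  calc #(finCut G (A1 ∆ A2) (A1 ∆ A2)ᶜ)
      ≤ #(finCut G A1 A1ᶜ \ T) + #(finCut G A2 A2ᶜ \ T) := by
        rw [finCut_symmDiff]
        exact card_symmDiff_le_card_sdiff_add_card_sdiff hT1 hT2
    _ ≤ k + k := add_le_add (card_le_of_one_le_of_sum_le (hweight A1) hw1)
        (card_le_of_one_le_of_sum_le (hweight A2) hw2)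
    _ = 2 * k := (two_mul k).symm

/-- Let `k, q > 0`, `p = 2k`, and let `G` be a finite connected graph with positive
edge weights `w` and terminal edges `T`. Suppose `G` is `(pq, p)`-unbreakable: there is
no partition `(A, B)` of the vertices with `|A| > pq`, `|B| > pq` and `|E(A,B)| ≤ p`.
If `(A1, B1)` and `(A2, B2)` are cuts with `T ⊆ E(Ai, Bi)` and nonterminal weight at
most `k`, then `min (|A1 ∆ A2|) (|A1 ∆ B2|) ≤ pq`. -/
theorem unbreakable_cuts_close {V : Type*} [Fintype V] [DecidableEq V]
    (G : SimpleGraph V) [DecidableRel G.Adj] (hconn : G.Connected)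
    (w : Sym2 V → ℕ) (hw : ∀ e ∈ G.edgeSet, 1 ≤ w e)
    (T : Finset (Sym2 V)) (hT : T ⊆ G.edgeFinset) (k q : ℕ) (hk : 0 < k) (hq : 0 < q)
    (hunbreak : ¬ ∃ A B : Finset V, A ∪ B = Finset.univ ∧ Disjoint A B ∧
      2 * k * q < A.card ∧ 2 * k * q < B.card ∧ (finCut G A B).card ≤ 2 * k)
    (A1 B1 A2 B2 : Finset V)
    (hpart1 : A1 ∪ B1 = Finset.univ) (hdisj1 : Disjoint A1 B1)
    (hpart2 : A2 ∪ B2 = Finset.univ) (hdisj2 : Disjoint A2 B2)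
    (hT1 : T ⊆ finCut G A1 B1) (hT2 : T ⊆ finCut G A2 B2)
    (hw1 : ∑ e ∈ finCut G A1 B1 \ T, w e ≤ k)
    (hw2 : ∑ e ∈ finCut G A2 B2 \ T, w e ≤ k) :
    min (symmDiff A1 A2).card (symmDiff A1 B2).card ≤ 2 * k * q :=
  unbreakable_cuts_close_general G w hw T k q hunbreak A1 B1 A2 B2 hpart1 hdisj1 hpart2 hdisj2 hT1
    hT2 hw1 hw2
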